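/- arXiv:math/0607200 — 7 statements merged into one kernel-verified Lean document; each statement's English description precedes it below -/
import Mathlib

section
/- Let l, m₁, ρ be real numbers with l > 0, m₁ > 0, ρ > 0, let 0 < b₁ < l, and let λ > 0. There exist twice continuously differentiable functions X₁, X₂ : ℝ → ℝ, with X₁ not identically zero on [0, b₁] or X₂ not identically zero on [b₁, l], such that X₁''(x) = −λ²X₁(x) for all x ∈ [0, b₁], X₂''(x) = −λ²X₂(x) for all x ∈ [b₁, l], X₁(0) = 0, X₂(l) = 0, X₁(b₁) = X₂(b₁), and X₂'(b₁) − X₁'(b₁) = −(m₁/ρ)·λ²·X₁(b₁), if and only if sin(λl)/λ − (m₁/ρ)·sin(λb₁)·sin(λ(l−b₁)) = 0. -/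
/-! On each interval, `X'' = -λ²X` together with the vanishing boundary value forces `X` to be a
multiple of a sine, `X₁ = A sin(λx)` and `X₂ = B sin(λ(x - l))`; uniqueness comes from the
conserved energy `X'² + λ²X²`. The continuity and jump conditions at `b₁` then form a homogeneous
2 × 2 linear system in `(A, B)`, whose determinant is `λ²` times the characteristic expression. -/

open Real Set

theorem exists_ne_zero_linear_fin_two_iff {R : Type*} [CommRing R] [IsDomain R] (a b c d : R) :
    (∃ x y : R, (x ≠ 0 ∨ y ≠ 0) ∧ a * x + b * y = 0 ∧ c * x + d * y = 0) ↔
      a * d - b * c = 0 := by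
  rw [← Matrix.det_fin_two_of, ← Matrix.exists_mulVec_eq_zero_iff]
  constructor
  · rintro ⟨x, y, hxy, h₁, h₂⟩
    refine ⟨![x, y], ?_, ?_⟩
    · simpa [funext_iff, Fin.forall_fin_two, or_iff_not_imp_left] using hxy
    · ext i; fin_cases i <;> simp [Matrix.mulVec, h₁, h₂]
  · rintro ⟨v, hv, h⟩
    refine ⟨v 0, v 1, ?_, ?_, ?_⟩
    · by_contra! h0
      exact hv (funext (Fin.forall_fin_two.2 h0))
    · simpa [Matrix.mulVec, dotProduct, Fin.sum_univ_two] using congrFun h 0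
    · simpa [Matrix.mulVec, dotProduct, Fin.sum_univ_two] using congrFun h 1

section HarmonicOscillator

variable {f : ℝ → ℝ} {ω a b c : ℝ}

theorem hasDerivAt_mul_sin_mul_sub (A ω c x : ℝ) :
    HasDerivAt (fun x => A * sin (ω * (x - c))) (A * ω * cos (ω * (x - c))) x := by
  have h := (((hasDerivAt_id x).sub_const c).const_mul ω).sin.const_mul A
  exact h.congr_deriv (by rw [id]; ring)

theorem hasDerivAt_mul_cos_mul_sub (A ω c x : ℝ) :
    HasDerivAt (fun x => A * ω * cos (ω * (x - c))) (-ω ^ 2 * (A * sin (ω * (x - c)))) x := by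
  have h := (((hasDerivAt_id x).sub_const c).const_mul ω).cos.const_mul (A * ω)
  exact h.congr_deriv (by rw [id]; ring)

theorem deriv_mul_sin_mul_sub (A ω c : ℝ) :
    deriv (fun x => A * sin (ω * (x - c))) = fun x => A * ω * cos (ω * (x - c)) :=
  funext fun x => (hasDerivAt_mul_sin_mul_sub A ω c x).deriv

theorem deriv_deriv_mul_sin_mul_sub (A ω c x : ℝ) :
    deriv (deriv fun x => A * sin (ω * (x - c))) x = -ω ^ 2 * (A * sin (ω * (x - c))) := by
  rw [deriv_mul_sin_mul_sub]
  exact (hasDerivAt_mul_cos_mul_sub A ω c x).deriv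

/-- Conservation of the energy `f' ^ 2 + ω ^ 2 f ^ 2`. -/
theorem eqOn_zero_of_deriv_deriv_eq_neg_mul (hω : ω ≠ 0) (hf : Differentiable ℝ f)
    (hf' : Differentiable ℝ (deriv f)) (hode : ∀ x ∈ Icc a b, deriv (deriv f) x = -ω ^ 2 * f x)
    (hc : c ∈ Icc a b) (h₀ : f c = 0) (h₁ : deriv f c = 0) :
    ∀ x ∈ Icc a b, f x = 0 ∧ deriv f x = 0 := by
  set E : ℝ → ℝ := fun x => deriv f x ^ 2 + ω ^ 2 * f x ^ 2
  have hE : ∀ x ∈ Icc a b, HasDerivAt E 0 x := fun x hx =>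
    (((hf' x).hasDerivAt.pow 2).add (((hf x).hasDerivAt.pow 2).const_mul (ω ^ 2))).congr_deriv
      (by rw [hode x hx]; ring)
  have hconst := constant_of_has_deriv_right_zero (f := E)
    ((hf'.continuous.pow 2).add (continuous_const.mul (hf.continuous.pow 2))).continuousOn
    fun x hx => (hE x (Ico_subset_Icc_self hx)).hasDerivWithinAt
  intro x hx
  have hEx : deriv f x ^ 2 + ω ^ 2 * f x ^ 2 = 0 := by
    rw [← hconst c hc] at hconst; simpa [E, h₀, h₁] using hconst x hx
  obtain ⟨hd, hv⟩ := (add_eq_zero_iff_of_nonneg (sq_nonneg _) (by positivity)).1 hEx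
  exact ⟨by simpa [hω] using hv, by simpa using hd⟩

theorem eqOn_mul_sin_of_deriv_deriv_eq_neg_mul {A : ℝ} (hω : ω ≠ 0) (hf : Differentiable ℝ f)
    (hf' : Differentiable ℝ (deriv f)) (hode : ∀ x ∈ Icc a b, deriv (deriv f) x = -ω ^ 2 * f x)
    (hc : c ∈ Icc a b) (h₀ : f c = 0) (h₁ : deriv f c = A * ω) :
    ∀ x ∈ Icc a b, f x = A * sin (ω * (x - c)) ∧ deriv f x = A * ω * cos (ω * (x - c)) := by
  have hg : deriv (f - fun x => A * sin (ω * (x - c))) =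
      deriv f - fun x => A * ω * cos (ω * (x - c)) :=
    funext fun x => ((hf x).hasDerivAt.sub (hasDerivAt_mul_sin_mul_sub A ω c x)).deriv
  have hzero := eqOn_zero_of_deriv_deriv_eq_neg_mul (f := f - fun x => A * sin (ω * (x - c))) hω
    (hf.sub fun x => (hasDerivAt_mul_sin_mul_sub A ω c x).differentiableAt)
    (by rw [hg]; exact hf'.sub fun x => (hasDerivAt_mul_cos_mul_sub A ω c x).differentiableAt)
    (fun x hx => by
      rw [hg, ((hf' x).hasDerivAt.sub (hasDerivAt_mul_cos_mul_sub A ω c x)).deriv, hode x hx]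
      simp only [Pi.sub_apply]; ring)
    hc (by simp [h₀]) (by simp [hg, h₁])
  intro x hx
  obtain ⟨hv, hd⟩ := hzero x hx
  rw [hg] at hd
  exact ⟨sub_eq_zero.1 hv, sub_eq_zero.1 hd⟩

end HarmonicOscillator

theorem exists_mem_Ioc_sin_mul_ne_zero {ω b : ℝ} (hω : ω ≠ 0) (hb : 0 < b) :
    ∃ x ∈ Ioc 0 b, sin (ω * x) ≠ 0 := by
  have hx : 0 < min b |ω|⁻¹ := lt_min hb (by positivity)
  refine ⟨min b |ω|⁻¹, ⟨hx, min_le_left _ _⟩, ?_⟩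
  have hlt : |ω * min b |ω|⁻¹| < π := by
    calc |ω * min b |ω|⁻¹| = |ω| * min b |ω|⁻¹ := by rw [abs_mul, abs_of_pos hx]
      _ ≤ |ω| * |ω|⁻¹ := by gcongr; exact min_le_right _ _
      _ = 1 := mul_inv_cancel₀ (abs_ne_zero.2 hω)
      _ < π := by linarith [pi_gt_three]
  rw [Ne, sin_eq_zero_iff_of_lt_of_lt (neg_lt_of_abs_lt hlt) (lt_of_abs_lt hlt)]
  exact mul_ne_zero hω hx.ne'

/-- `κ` is the mass ratio `m₁ / ρ` of the load. -/
def IsLoadedCableMode (l κ b ω : ℝ) (X₁ X₂ : ℝ → ℝ) : Prop :=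
  ContDiff ℝ 2 X₁ ∧ ContDiff ℝ 2 X₂ ∧
    (¬ (∀ x ∈ Icc (0 : ℝ) b, X₁ x = 0) ∨ ¬ (∀ x ∈ Icc b l, X₂ x = 0)) ∧
    (∀ x ∈ Icc (0 : ℝ) b, deriv (deriv X₁) x = -ω ^ 2 * X₁ x) ∧
    (∀ x ∈ Icc b l, deriv (deriv X₂) x = -ω ^ 2 * X₂ x) ∧
    X₁ 0 = 0 ∧ X₂ l = 0 ∧ X₁ b = X₂ b ∧
    deriv X₂ b - deriv X₁ b = -κ * ω ^ 2 * X₁ b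

section LoadedCable

variable {l κ b ω : ℝ}

theorem sin_mul_sub_comm (ω x y : ℝ) : sin (ω * (x - y)) = -sin (ω * (y - x)) := by
  rw [← sin_neg]; ring_nf

theorem cos_mul_sub_comm (ω x y : ℝ) : cos (ω * (x - y)) = cos (ω * (y - x)) := by
  rw [← cos_neg]; ring_nf

theorem IsLoadedCableMode.exists_amplitudes {X₁ X₂ : ℝ → ℝ} (hω : ω ≠ 0) (hb : 0 ≤ b)
    (hbl : b ≤ l) (h : IsLoadedCableMode l κ b ω X₁ X₂) :
    ∃ A B : ℝ, (A ≠ 0 ∨ B ≠ 0) ∧ sin (ω * b) * A + sin (ω * (l - b)) * B = 0 ∧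
      (κ * ω ^ 2 * sin (ω * b) - ω * cos (ω * b)) * A + ω * cos (ω * (l - b)) * B = 0 := by
  obtain ⟨hX₁, hX₂, hnt, hode₁, hode₂, h₀, hₗ, hcont, hjump⟩ := h
  have hsol₁ := eqOn_mul_sin_of_deriv_deriv_eq_neg_mul hω (hX₁.differentiable two_ne_zero)
    hX₁.differentiable_deriv_two hode₁ (left_mem_Icc.2 hb) h₀ (div_mul_cancel₀ _ hω).symm
  have hsol₂ := eqOn_mul_sin_of_deriv_deriv_eq_neg_mul hω (hX₂.differentiable two_ne_zero)
    hX₂.differentiable_deriv_two hode₂ (right_mem_Icc.2 hbl) hₗ (div_mul_cancel₀ _ hω).symm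
  obtain ⟨hv₁, hd₁⟩ := hsol₁ b (right_mem_Icc.2 hb)
  obtain ⟨hv₂, hd₂⟩ := hsol₂ b (left_mem_Icc.2 hbl)
  rw [sub_zero] at hv₁ hd₁
  rw [sin_mul_sub_comm] at hv₂
  rw [cos_mul_sub_comm] at hd₂
  refine ⟨deriv X₁ 0 / ω, deriv X₂ l / ω, ?_, ?_, ?_⟩
  · refine hnt.imp (fun h hA => h fun x hx => ?_) (fun h hB => h fun x hx => ?_)
    · rw [(hsol₁ x hx).1, hA, zero_mul]
    · rw [(hsol₂ x hx).1, hB, zero_mul]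
  · linear_combination hv₂ - hv₁ + hcont
  · rw [hd₁, hd₂, hv₁] at hjump
    linear_combination hjump

theorem isLoadedCableMode_mul_sin {A B : ℝ} (hω : ω ≠ 0) (hb : 0 < b) (hbl : b < l)
    (hAB : A ≠ 0 ∨ B ≠ 0) (hcont : sin (ω * b) * A + sin (ω * (l - b)) * B = 0)
    (hjump : (κ * ω ^ 2 * sin (ω * b) - ω * cos (ω * b)) * A + ω * cos (ω * (l - b)) * B = 0) :
    IsLoadedCableMode l κ b ω (fun x => A * sin (ω * (x - 0)))
      (fun x => B * sin (ω * (x - l))) := by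
  refine ⟨by fun_prop, by fun_prop, ?_, fun x _ => deriv_deriv_mul_sin_mul_sub A ω 0 x,
    fun x _ => deriv_deriv_mul_sin_mul_sub B ω l x, by simp, by simp, ?_, ?_⟩
  · refine hAB.imp (fun hA h => ?_) (fun hB h => ?_)
    · obtain ⟨x, hx, hsin⟩ := exists_mem_Ioc_sin_mul_ne_zero hω hb
      refine mul_ne_zero hA ?_ (h x (Ioc_subset_Icc_self hx))
      rwa [sub_zero]
    · obtain ⟨y, hy, hsin⟩ := exists_mem_Ioc_sin_mul_ne_zero (neg_ne_zero.2 hω) (sub_pos.2 hbl)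
      refine mul_ne_zero hB ?_ (h (l - y) ⟨by linarith [hy.2], by linarith [hy.1]⟩)
      convert hsin using 2; ring
  · simp only [sub_zero]
    rw [sin_mul_sub_comm]
    linear_combination hcont
  · rw [deriv_mul_sin_mul_sub, deriv_mul_sin_mul_sub]
    simp only [sub_zero]
    rw [cos_mul_sub_comm]
    linear_combination hjump

theorem exists_isLoadedCableMode_iff (hω : ω ≠ 0) (hb : 0 < b) (hbl : b < l) :
    (∃ X₁ X₂, IsLoadedCableMode l κ b ω X₁ X₂) ↔
      ∃ A B : ℝ, (A ≠ 0 ∨ B ≠ 0) ∧ sin (ω * b) * A + sin (ω * (l - b)) * B = 0 ∧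
        (κ * ω ^ 2 * sin (ω * b) - ω * cos (ω * b)) * A + ω * cos (ω * (l - b)) * B = 0 :=
  ⟨fun ⟨_, _, h⟩ => h.exists_amplitudes hω hb.le hbl.le,
    fun ⟨_, _, hAB, hcont, hjump⟩ => ⟨_, _, isLoadedCableMode_mul_sin hω hb hbl hAB hcont hjump⟩⟩

end LoadedCable

theorem cable_one_load_eigenvalue_characterization_general
    (l m₁ ρ b₁ lam : ℝ)
    (hb₁ : 0 < b₁) (hb₁l : b₁ < l) (hlam : 0 < lam) :
    (∃ X₁ X₂ : ℝ → ℝ, ContDiff ℝ 2 X₁ ∧ ContDiff ℝ 2 X₂ ∧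
      (¬ (∀ x ∈ Icc (0 : ℝ) b₁, X₁ x = 0) ∨ ¬ (∀ x ∈ Icc b₁ l, X₂ x = 0)) ∧
      (∀ x ∈ Icc (0 : ℝ) b₁, deriv (deriv X₁) x = -lam ^ 2 * X₁ x) ∧
      (∀ x ∈ Icc b₁ l, deriv (deriv X₂) x = -lam ^ 2 * X₂ x) ∧
      X₁ 0 = 0 ∧ X₂ l = 0 ∧ X₁ b₁ = X₂ b₁ ∧
      deriv X₂ b₁ - deriv X₁ b₁ = -(m₁ / ρ) * lam ^ 2 * X₁ b₁) ↔
    Real.sin (lam * l) / lam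
      - (m₁ / ρ) * Real.sin (lam * b₁) * Real.sin (lam * (l - b₁)) = 0 := by
  have hdet : sin (lam * b₁) * (lam * cos (lam * (l - b₁))) - sin (lam * (l - b₁)) *
      (m₁ / ρ * lam ^ 2 * sin (lam * b₁) - lam * cos (lam * b₁)) =
      lam ^ 2 * (sin (lam * l) / lam - m₁ / ρ * sin (lam * b₁) * sin (lam * (l - b₁))) := by
    rw [show lam * l = lam * b₁ + lam * (l - b₁) by ring, sin_add]
    field_simp
    ring
  change (∃ X₁ X₂, IsLoadedCableMode l (m₁ / ρ) b₁ lam X₁ X₂) ↔ _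
  rw [exists_isLoadedCableMode_iff hlam.ne' hb₁ hb₁l, exists_ne_zero_linear_fin_two_iff, hdet,
    mul_eq_zero, or_iff_right (pow_ne_zero 2 hlam.ne')]

/-- For the cable with one discrete load of mass `m₁` fixed at `b₁ ∈ (0, l)`,
a nontrivial solution of the continuous-discrete boundary problem exists
iff `sin(λl)/λ − (m₁/ρ)·sin(λb₁)·sin(λ(l−b₁)) = 0`. -/
theorem cable_one_load_eigenvalue_characterization
    (l m₁ ρ b₁ lam : ℝ) (hl : 0 < l) (hm : 0 < m₁) (hρ : 0 < ρ)
    (hb₁ : 0 < b₁) (hb₁l : b₁ < l) (hlam : 0 < lam) :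
    (∃ X₁ X₂ : ℝ → ℝ, ContDiff ℝ 2 X₁ ∧ ContDiff ℝ 2 X₂ ∧
      (¬ (∀ x ∈ Icc (0 : ℝ) b₁, X₁ x = 0) ∨ ¬ (∀ x ∈ Icc b₁ l, X₂ x = 0)) ∧
      (∀ x ∈ Icc (0 : ℝ) b₁, deriv (deriv X₁) x = -lam ^ 2 * X₁ x) ∧
      (∀ x ∈ Icc b₁ l, deriv (deriv X₂) x = -lam ^ 2 * X₂ x) ∧
      X₁ 0 = 0 ∧ X₂ l = 0 ∧ X₁ b₁ = X₂ b₁ ∧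
      deriv X₂ b₁ - deriv X₁ b₁ = -(m₁ / ρ) * lam ^ 2 * X₁ b₁) ↔
    Real.sin (lam * l) / lam
      - (m₁ / ρ) * Real.sin (lam * b₁) * Real.sin (lam * (l - b₁)) = 0 :=
  cable_one_load_eigenvalue_characterization_general l m₁ ρ b₁ lam hb₁ hb₁l hlam
end

section
/- Let l, m₁, ρ be real numbers with l > 0, m₁ > 0, ρ > 0 and let 0 < b₁ < l. Then there exists λ with 0 < λ < π/l such that sin(λl)/λ − (m₁/ρ)·sin(λb₁)·sin(λ(l−b₁)) = 0. Hence, for any location of the discrete mass m₁ in (0, l), the first eigenvalue of the continuous-discrete problem is strictly smaller than the first eigenvalue π/l of the corresponding continuous problem. -/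
/-!
Writing `sin (λ l) / λ = l · sinc (λ l)` extends the characteristic function continuously to
`λ = 0`, where it takes the value `l > 0`. At `λ = π / l` the first term vanishes while both sine
factors of the load term are positive, so the value there is negative. The intermediate value
theorem on `[0, π / l]` then gives a root strictly inside.
-/

open Real Set

lemma sin_mul_div_eq_mul_sinc {x : ℝ} (hx : x ≠ 0) (l : ℝ) :
    sin (x * l) / x = l * sinc (x * l) := by
  rcases eq_or_ne l 0 with rfl | hl
  · simp
  · rw [sinc_of_ne_zero (mul_ne_zero hx hl)]
    field_simp

lemma sin_pi_div_mul_pos {l b : ℝ} (hb : 0 < b) (hbl : b < l) : 0 < sin (π / l * b) := by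
  have hl : 0 < l := hb.trans hbl
  apply sin_pos_of_pos_of_lt_pi (by positivity)
  rw [div_mul_eq_mul_div, div_lt_iff₀ hl]
  exact mul_lt_mul_of_pos_left hbl pi_pos

/-- The characteristic function `g` of the context with `c = m₁ / ρ`, extended continuously to
`λ = 0` (where `sin (λ l) / λ` would otherwise take the junk value `0`). -/
noncomputable def loadedCableChar (l c b x : ℝ) : ℝ :=
  l * sinc (x * l) - c * sin (x * b) * sin (x * (l - b))

section loadedCableChar

variable (l c b : ℝ)

lemma loadedCableChar_of_ne_zero {x : ℝ} (hx : x ≠ 0) :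
    loadedCableChar l c b x = sin (x * l) / x - c * sin (x * b) * sin (x * (l - b)) := by
  rw [loadedCableChar, sin_mul_div_eq_mul_sinc hx]

@[simp]
lemma loadedCableChar_zero : loadedCableChar l c b 0 = l := by
  simp [loadedCableChar]

lemma continuous_loadedCableChar : Continuous (loadedCableChar l c b) := by
  unfold loadedCableChar
  fun_prop

variable {l c b}

lemma loadedCableChar_pi_div_neg (hc : 0 < c) (hb : 0 < b) (hbl : b < l) :
    loadedCableChar l c b (π / l) < 0 := by
  have hl : l ≠ 0 := (hb.trans hbl).ne'
  have hsin_b := sin_pi_div_mul_pos hb hbl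
  have hsin_lb := sin_pi_div_mul_pos (sub_pos.2 hbl) (sub_lt_self l hb)
  rw [loadedCableChar_of_ne_zero l c b (div_ne_zero pi_ne_zero hl), div_mul_cancel₀ π hl,
    sin_pi, zero_div, zero_sub, neg_neg_iff_pos]
  positivity

end loadedCableChar

/-- For any location `b₁ ∈ (0, l)` of the discrete mass, the characteristic function
has a root strictly below `π/l`: the first eigenvalue of the continuous-discrete
problem is strictly smaller than the first eigenvalue of the continuous problem. -/
theorem first_eigenvalue_decreases_with_load
    (l m₁ ρ b₁ : ℝ) (hl : 0 < l) (hm : 0 < m₁) (hρ : 0 < ρ)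
    (hb₁ : 0 < b₁) (hb₁l : b₁ < l) :
    ∃ lam : ℝ, 0 < lam ∧ lam < π / l ∧
      Real.sin (lam * l) / lam
        - (m₁ / ρ) * Real.sin (lam * b₁) * Real.sin (lam * (l - b₁)) = 0 := by
  have hF_end := loadedCableChar_pi_div_neg (div_pos hm hρ) hb₁ hb₁l
  have hF_start : 0 < loadedCableChar l (m₁ / ρ) b₁ 0 := by rwa [loadedCableChar_zero]
  obtain ⟨lam, ⟨hlam_pos, hlam_lt⟩, hroot⟩ :=
    intermediate_value_Ioo' (by positivity) (continuous_loadedCableChar l _ b₁).continuousOn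
      ⟨hF_end, hF_start⟩
  rw [loadedCableChar_of_ne_zero l _ b₁ hlam_pos.ne'] at hroot
  exact ⟨lam, hlam_pos, hlam_lt, hroot⟩
end

section
/- Let l, m₁, ρ be real numbers with l > 0, m₁ > 0, ρ > 0 and let 0 < b₁ < l. Then for every positive integer k there exists λ with (k−1)π/l ≤ λ ≤ kπ/l, λ > 0, and sin(λl)/λ − (m₁/ρ)·sin(λb₁)·sin(λ(l−b₁)) = 0. Hence the k-th eigenvalue of the continuous-discrete boundary problem with one discrete load never exceeds the k-th eigenvalue kπ/l of the corresponding continuous problem. -/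
open Real Set

/-- In each interval `[(k−1)π/l, kπ/l]` the characteristic function of the loaded
cable has a positive root: the k-th eigenvalue of the continuous-discrete problem
never exceeds the k-th eigenvalue `kπ/l` of the continuous problem. -/
theorem eigenvalues_le_continuous_eigenvalues
    (l m₁ ρ b₁ : ℝ) (hl : 0 < l) (hm : 0 < m₁) (hρ : 0 < ρ)
    (hb₁ : 0 < b₁) (hb₁l : b₁ < l) :
    ∀ k : ℕ, 0 < k → ∃ lam : ℝ,
      ((k : ℝ) - 1) * π / l ≤ lam ∧ lam ≤ (k : ℝ) * π / l ∧ 0 < lam ∧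
      Real.sin (lam * l) / lam
        - (m₁ / ρ) * Real.sin (lam * b₁) * Real.sin (lam * (l - b₁)) = 0 := by
  intro k hk
  have hl0 : l ≠ 0 := hl.ne'
  set c : ℝ := m₁ / ρ with hc
  have hc0 : 0 < c := div_pos hm hρ
  set g : ℝ → ℝ := fun x =>
    Real.sin (x * l) / x - c * Real.sin (x * b₁) * Real.sin (x * (l - b₁)) with hg
  -- endpoint values
  have hend : ∀ j : ℕ, g ((j : ℝ) * π / l) =
      c * (-1) ^ j * (Real.sin ((j : ℝ) * π / l * b₁)) ^ 2 := by
    intro j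
    have h1 : ((j : ℝ) * π / l) * l = (j : ℝ) * π := by field_simp
    have h2 : ((j : ℝ) * π / l) * (l - b₁) = (j : ℝ) * π - ((j : ℝ) * π / l) * b₁ := by
      field_simp
    simp only [hg, h1, h2, Real.sin_nat_mul_pi, Real.sin_nat_mul_pi_sub, zero_div]
    ring
  -- continuity on sets avoiding 0
  have hcont : ∀ s : Set ℝ, (0 : ℝ) ∉ s → ContinuousOn g s := by
    intro s hs
    apply ContinuousOn.sub
    · exact ((Real.continuous_sin.comp (continuous_id.mul continuous_const)).continuousOn).div
        continuousOn_id (fun x hx => fun h => hs (h ▸ hx))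
    · fun_prop
  rcases eq_or_lt_of_le (Nat.one_le_iff_ne_zero.mpr hk.ne') with hk1 | hk2
  · -- k = 1
    have hk1 : k = 1 := hk1.symm
    subst hk1
    -- g tends to l at 0⁺
    have hslope : Filter.Tendsto (fun x : ℝ => Real.sin x / x)
        (nhdsWithin 0 {(0:ℝ)}ᶜ) (nhds 1) := by
      have := (hasDerivAt_iff_tendsto_slope.mp (Real.hasDerivAt_sin 0))
      simp only [Real.cos_zero] at this
      refine this.congr' ?_
      filter_upwards [self_mem_nhdsWithin] with x hx
      simp [slope_def_field, div_eq_iff, Real.sin_zero]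
    have hmap : Filter.Tendsto (fun x : ℝ => x * l) (nhdsWithin 0 (Ioi 0))
        (nhdsWithin 0 {(0:ℝ)}ᶜ) := by
      rw [tendsto_nhdsWithin_iff]
      constructor
      · have t1 : Filter.Tendsto (fun x : ℝ => x * l) (nhds 0) (nhds (0 * l)) :=
          (continuous_id.mul continuous_const).tendsto (0 : ℝ)
        simpa using t1.mono_left nhdsWithin_le_nhds
      · filter_upwards [self_mem_nhdsWithin] with x hx
        exact fun h => absurd h (mul_ne_zero (ne_of_gt hx) hl0)
    have htend : Filter.Tendsto g (nhdsWithin 0 (Ioi 0)) (nhds l) := by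
      have h1 : Filter.Tendsto (fun x : ℝ => Real.sin (x * l) / x)
          (nhdsWithin 0 (Ioi 0)) (nhds l) := by
        have := (hslope.comp hmap).const_mul l
        simp only [mul_one] at this
        refine this.congr' ?_
        filter_upwards [self_mem_nhdsWithin] with x hx
        have hx0 : x ≠ 0 := ne_of_gt hx
        simp only [Function.comp]
        field_simp
      have h2 : Filter.Tendsto (fun x : ℝ => c * Real.sin (x * b₁) * Real.sin (x * (l - b₁)))
          (nhdsWithin 0 (Ioi 0)) (nhds 0) := by
        have hcts : Continuous (fun x : ℝ => c * Real.sin (x * b₁) * Real.sin (x * (l - b₁))) := by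
          fun_prop
        have t := (hcts.tendsto 0).mono_left (nhdsWithin_le_nhds (s := Ioi (0:ℝ)))
        simpa using t
      simpa using h1.sub h2
    have hev : ∀ᶠ x in nhdsWithin 0 (Ioi 0), 0 < g x := htend.eventually (eventually_gt_nhds hl)
    have hev2 : Ioo (0:ℝ) (π / l) ∈ nhdsWithin 0 (Ioi 0) :=
      Ioo_mem_nhdsGT_of_mem ⟨le_refl 0, div_pos Real.pi_pos hl⟩
    obtain ⟨a, ha, ha2⟩ := (hev.and (Filter.eventually_of_mem hev2 fun x hx => hx)).exists
    have hgb0 : g ((1:ℝ) * π / l) ≤ 0 := by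
      have h := hend 1
      norm_num at h
      rw [show (1:ℝ) * π / l = π / l by ring, h]
      have : (0:ℝ) ≤ c * Real.sin (π / l * b₁) ^ 2 := by positivity
      linarith
    have hsub : Icc (g ((1:ℝ)*π/l)) (g a) ⊆ g '' Icc a ((1:ℝ)*π/l) := by
      apply intermediate_value_Icc' (by rw [one_mul]; exact ha2.2.le)
      apply hcont
      intro h0
      exact absurd h0.1 (not_le.mpr ha2.1)
    obtain ⟨lam, hlam, hglam⟩ := hsub ⟨hgb0, ha.le⟩
    refine ⟨lam, ?_, ?_, ?_, hglam⟩
    · have : ((1:ℝ) - 1) * π / l = 0 := by ring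
      rw [Nat.cast_one, this]
      exact le_of_lt (lt_of_lt_of_le ha2.1 hlam.1)
    · simpa using hlam.2
    · exact lt_of_lt_of_le ha2.1 hlam.1
  · -- k ≥ 2
    obtain ⟨j, rfl⟩ : ∃ j, k = j + 1 := ⟨k - 1, (Nat.succ_pred_eq_of_pos hk).symm⟩
    have hj1 : 1 ≤ j := Nat.lt_succ_iff.mp hk2
    set a := (j : ℝ) * π / l with hadef
    set b := ((j : ℝ) + 1) * π / l with hbdef
    have hj1' : (1:ℝ) ≤ (j:ℝ) := by exact_mod_cast hj1
    have ha0 : 0 < a := div_pos (mul_pos (by linarith) Real.pi_pos) hl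
    have hab : a ≤ b := by
      rw [hadef, hbdef, div_le_div_iff₀ hl hl]
      nlinarith [Real.pi_pos]
    have hga : g a = c * (-1) ^ j * (Real.sin (a * b₁)) ^ 2 := hend j
    have hgb : g b = -(c * (-1) ^ j * (Real.sin (b * b₁)) ^ 2) := by
      have h := hend (j + 1)
      push_cast at h
      rw [hbdef]
      rw [h]
      ring
    have hcnt : ContinuousOn g (Icc a b) := by
      apply hcont
      intro h0
      exact absurd h0.1 (not_le.mpr ha0)
    have key : ∃ lam ∈ Icc a b, g lam = 0 := by
      rcases Nat.even_or_odd j with he | ho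
      · -- g a ≥ 0, g b ≤ 0
        have e1 : ((-1:ℝ)) ^ j = 1 := he.neg_one_pow
        have hga0 : 0 ≤ g a := by rw [hga, e1]; positivity
        have hgb0 : g b ≤ 0 := by
          rw [hgb, e1]
          have : (0:ℝ) ≤ c * 1 * (Real.sin (b * b₁)) ^ 2 := by positivity
          linarith
        obtain ⟨lam, hlam, hglam⟩ := intermediate_value_Icc' hab hcnt ⟨hgb0, hga0⟩
        exact ⟨lam, hlam, hglam⟩
      · have e1 : ((-1:ℝ)) ^ j = -1 := ho.neg_one_pow
        have hga0 : g a ≤ 0 := by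
          rw [hga, e1]
          have : (0:ℝ) ≤ c * (Real.sin (a * b₁)) ^ 2 := by positivity
          nlinarith
        have hgb0 : 0 ≤ g b := by
          rw [hgb, e1]
          have : (0:ℝ) ≤ c * (Real.sin (b * b₁)) ^ 2 := by positivity
          nlinarith
        obtain ⟨lam, hlam, hglam⟩ := intermediate_value_Icc hab hcnt ⟨hga0, hgb0⟩
        exact ⟨lam, hlam, hglam⟩
    obtain ⟨lam, hlam, hglam⟩ := key
    refine ⟨lam, ?_, ?_, lt_of_lt_of_le ha0 hlam.1, hglam⟩
    · have : ((↑(j+1) : ℝ) - 1) * π / l = a := by push_cast [hadef]; ring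
      rw [this]; exact hlam.1
    · have : ((↑(j+1) : ℝ)) * π / l = b := by push_cast [hbdef]; ring
      rw [this]; exact hlam.2
end

section
/- Let l, m₁, ρ be real numbers with l > 0, m₁ > 0, ρ > 0 and let 0 < b₁ < l. Then the set of positive roots of g(λ) = sin(λl)/λ − (m₁/ρ)·sin(λb₁)·sin(λ(l−b₁)) has a least element λ₀, and it satisfies 0 < λ₀ ≤ π/l; that is, there exists λ₀ ∈ (0, π/l] with g(λ₀) = 0 and g(λ) ≠ 0 for all λ ∈ (0, λ₀). (The first eigenvalue of the continuous-discrete problem is well defined.) -/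
open Real Set Filter Topology

/-- The set of positive roots of the characteristic function of the loaded cable
has a least element `λ₀ ∈ (0, π/l]`: the first eigenvalue is well defined. -/
theorem first_eigenvalue_exists
    (l m₁ ρ b₁ : ℝ) (hl : 0 < l) (hm : 0 < m₁) (hρ : 0 < ρ)
    (hb₁ : 0 < b₁) (hb₁l : b₁ < l) :
    ∃ lam₀ : ℝ, 0 < lam₀ ∧ lam₀ ≤ π / l ∧
      Real.sin (lam₀ * l) / lam₀
        - (m₁ / ρ) * Real.sin (lam₀ * b₁) * Real.sin (lam₀ * (l - b₁)) = 0 ∧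
      ∀ lam : ℝ, 0 < lam → lam < lam₀ →
        Real.sin (lam * l) / lam
          - (m₁ / ρ) * Real.sin (lam * b₁) * Real.sin (lam * (l - b₁)) ≠ 0 := by
  set g : ℝ → ℝ := fun x =>
    Real.sin (x * l) / x - (m₁ / ρ) * Real.sin (x * b₁) * Real.sin (x * (l - b₁)) with hg
  -- sin y / y → 1 as y → 0 (y ≠ 0)
  have hslope : Tendsto (fun y : ℝ => Real.sin y / y) (𝓝[≠] (0:ℝ)) (𝓝 1) := by
    have h := (hasDerivAt_sin 0)
    rw [hasDerivAt_iff_tendsto_slope] at h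
    refine Tendsto.congr (fun y => ?_) (by simpa using h)
    simp [slope_def_field]
  -- x * l → 0 within ≠ 0 as x → 0⁺
  have hxl : Tendsto (fun x : ℝ => x * l) (𝓝[>] (0:ℝ)) (𝓝[≠] (0:ℝ)) := by
    apply tendsto_nhdsWithin_of_tendsto_nhds_of_eventually_within
    · exact ((continuous_id.mul continuous_const).tendsto' 0 0 (by simp)).mono_left
        nhdsWithin_le_nhds
    · filter_upwards [self_mem_nhdsWithin] with x hx
      exact (mul_pos hx hl).ne'
  -- g → l as x → 0⁺
  have hgt : Tendsto g (𝓝[>] (0:ℝ)) (𝓝 l) := by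
    have h1 : Tendsto (fun x : ℝ => Real.sin (x * l) / x) (𝓝[>] (0:ℝ)) (𝓝 l) := by
      have h2 : Tendsto (fun x : ℝ => l * (Real.sin (x * l) / (x * l)))
          (𝓝[>] (0:ℝ)) (𝓝 (l * 1)) := (hslope.comp hxl).const_mul l
      rw [mul_one] at h2
      refine h2.congr' ?_
      filter_upwards [self_mem_nhdsWithin] with x hx
      have hx0 : (x : ℝ) ≠ 0 := (hx : (0:ℝ) < x).ne'
      field_simp
    have h3 : Tendsto (fun x : ℝ =>
        (m₁ / ρ) * Real.sin (x * b₁) * Real.sin (x * (l - b₁))) (𝓝[>] (0:ℝ)) (𝓝 0) := by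
      have hc : Continuous (fun x : ℝ =>
          (m₁ / ρ) * Real.sin (x * b₁) * Real.sin (x * (l - b₁))) := by fun_prop
      exact (hc.tendsto' 0 0 (by simp)).mono_left nhdsWithin_le_nhds
    simpa using h1.sub h3
  -- g > 0 near 0⁺
  have hev : ∀ᶠ x in 𝓝[>] (0:ℝ), 0 < g x := hgt.eventually (eventually_gt_nhds hl)
  rw [eventually_iff, mem_nhdsGT_iff_exists_Ioo_subset] at hev
  obtain ⟨δ, hδ, hδpos⟩ := hev
  have hδ0 : (0:ℝ) < δ := hδ
  have hpos : ∀ x : ℝ, 0 < x → x < δ → 0 < g x := fun x h1 h2 => hδpos ⟨h1, h2⟩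
  -- g (π / l) < 0
  have hπl : (0:ℝ) < π / l := div_pos Real.pi_pos hl
  have hsin1 : 0 < Real.sin (π / l * b₁) := by
    apply Real.sin_pos_of_pos_of_lt_pi (mul_pos hπl hb₁)
    calc π / l * b₁ < π / l * l := by
          exact mul_lt_mul_of_pos_left hb₁l hπl
      _ = π := div_mul_cancel₀ π hl.ne'
  have hsin2 : 0 < Real.sin (π / l * (l - b₁)) := by
    apply Real.sin_pos_of_pos_of_lt_pi (mul_pos hπl (by linarith))
    calc π / l * (l - b₁) < π / l * l :=
          mul_lt_mul_of_pos_left (by linarith) hπl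
      _ = π := div_mul_cancel₀ π hl.ne'
  have hgπ : g (π / l) < 0 := by
    have h0 : Real.sin (π / l * l) = 0 := by
      rw [div_mul_cancel₀ π hl.ne', Real.sin_pi]
    have : 0 < (m₁ / ρ) * Real.sin (π / l * b₁) * Real.sin (π / l * (l - b₁)) := by
      positivity
    simp only [hg, h0, zero_div]
    linarith
  -- δ ≤ π/l
  have hδπ : δ ≤ π / l := by
    by_contra h
    exact absurd (hpos _ hπl (not_le.mp h)) (not_lt.mpr hgπ.le)
  set ε : ℝ := δ / 2 with hε
  have hε0 : 0 < ε := by positivity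
  have hεδ : ε < δ := by simpa [hε] using half_lt_self hδ0
  have hεπ : ε ≤ π / l := le_trans hεδ.le hδπ
  -- continuity of g on [ε, π/l]
  have hcont : ContinuousOn g (Icc ε (π / l)) := by
    apply ContinuousOn.sub
    · apply ContinuousOn.div
      · exact Continuous.continuousOn (by fun_prop)
      · exact continuousOn_id
      · intro x hx
        exact (lt_of_lt_of_le hε0 hx.1).ne'
    · exact Continuous.continuousOn (by fun_prop)
  -- IVT: a root in [ε, π/l]
  have hroot : ∃ c ∈ Icc ε (π / l), g c = 0 := by
    have h0mem : (0:ℝ) ∈ Icc (g (π / l)) (g ε) :=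
      ⟨hgπ.le, (hpos ε hε0 hεδ).le⟩
    obtain ⟨c, hc, hc0⟩ := intermediate_value_Icc' hεπ hcont h0mem
    exact ⟨c, hc, hc0⟩
  -- the set of roots in [ε, π/l] is compact and nonempty
  set S : Set ℝ := Icc ε (π / l) ∩ g ⁻¹' {0} with hS
  have hSne : S.Nonempty := by
    obtain ⟨c, hc, hc0⟩ := hroot
    exact ⟨c, hc, by simpa using hc0⟩
  have hSclosed : IsClosed S :=
    hcont.preimage_isClosed_of_isClosed isClosed_Icc isClosed_singleton
  have hScompact : IsCompact S :=
    isCompact_Icc.of_isClosed_subset hSclosed inter_subset_left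
  obtain ⟨lam₀, ⟨hlam₀mem, hlam₀root⟩, hleast⟩ := hScompact.exists_isLeast hSne
  refine ⟨lam₀, lt_of_lt_of_le hε0 hlam₀mem.1, hlam₀mem.2, by simpa using hlam₀root, ?_⟩
  intro lam hlam hlamlt hlam0
  have hglam : g lam = 0 := hlam0
  by_cases hcase : lam < δ
  · exact absurd hglam (hpos lam hlam hcase).ne'
  · have hlamS : lam ∈ S := by
      refine ⟨⟨le_trans hεδ.le (not_lt.mp hcase), le_trans hlamlt.le hlam₀mem.2⟩, by simpa using hglam⟩
    exact absurd (hleast hlamS) (not_le.mpr hlamlt)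
end

section
/- Let l, m₁, ρ, a be real numbers with l > 0, m₁ > 0, ρ > 0, a > 0, let 0 < b₁ < l, and let v ≥ 0. Then there exists λ with 0 < λ < π/l such that sin(λl)/λ − (m₁/ρ)·(a² + v²)·sin(λb₁)·sin(λ(l−b₁)) = 0; i.e., the first non-stationary eigenvalue of the cable with one load moving at steady speed v is strictly smaller than the first eigenvalue π/l of the continuous problem. -/
open Real Set

theorem exists_mem_Ioo_sin_mul_div_eq_mul_sin_mul_sin {l b C : ℝ} (hC : 0 < C) (hb : 0 < b)
    (hbl : b < l) :
    ∃ x ∈ Ioo 0 (π / l), sin (x * l) / x = C * sin (x * b) * sin (x * (l - b)) := by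
  have hl : 0 < l := hb.trans hbl
  set F : ℝ → ℝ := fun x ↦ l * sinc (x * l) - C * sin (x * b) * sin (x * (l - b))
  have hF_cont : ContinuousOn F (Icc 0 (π / l)) := by
    have := continuous_sinc
    fun_prop
  have hF_zero : 0 < F 0 := by simpa [F] using hl
  have hF_end : F (π / l) < 0 := by
    have h₁ := sin_pi_div_mul_pos hb hbl
    have h₂ := sin_pi_div_mul_pos (sub_pos.mpr hbl) (sub_lt_self l hb)
    have hsinc : sinc (π / l * l) = 0 := by
      rw [div_mul_cancel₀ π hl.ne', sinc_of_ne_zero pi_ne_zero, sin_pi, zero_div]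
    simp only [F, hsinc, mul_zero, zero_sub, neg_lt_zero]
    positivity
  obtain ⟨x, hx, hFx⟩ :=
    intermediate_value_Ioo' (by positivity) hF_cont ⟨hF_end, hF_zero⟩
  refine ⟨x, hx, ?_⟩
  rw [sin_mul_div_eq_mul_sinc hx.1.ne']
  exact sub_eq_zero.mp hFx

theorem moving_load_first_eigenvalue_lt_general
    (l m₁ ρ a b₁ v : ℝ) (hm : 0 < m₁) (hρ : 0 < ρ) (ha : 0 < a)
    (hb₁ : 0 < b₁) (hb₁l : b₁ < l) :
    ∃ lam : ℝ, 0 < lam ∧ lam < π / l ∧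
      Real.sin (lam * l) / lam
        - (m₁ / ρ) * (a ^ 2 + v ^ 2) * Real.sin (lam * b₁) * Real.sin (lam * (l - b₁))
      = 0 := by
  have hC : 0 < m₁ / ρ * (a ^ 2 + v ^ 2) := by positivity
  obtain ⟨lam, ⟨hpos, hlt⟩, hroot⟩ := exists_mem_Ioo_sin_mul_div_eq_mul_sin_mul_sin hC hb₁ hb₁l
  exact ⟨lam, hpos, hlt, sub_eq_zero.mpr hroot⟩

/-- The first non-stationary eigenvalue of the cable with one load moving at
steady speed `v` is strictly smaller than the first eigenvalue `π/l` of the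
continuous problem. -/
theorem moving_load_first_eigenvalue_lt
    (l m₁ ρ a b₁ v : ℝ) (hl : 0 < l) (hm : 0 < m₁) (hρ : 0 < ρ) (ha : 0 < a)
    (hb₁ : 0 < b₁) (hb₁l : b₁ < l) (hv : 0 ≤ v) :
    ∃ lam : ℝ, 0 < lam ∧ lam < π / l ∧
      Real.sin (lam * l) / lam
        - (m₁ / ρ) * (a ^ 2 + v ^ 2) * Real.sin (lam * b₁) * Real.sin (lam * (l - b₁))
      = 0 :=
  moving_load_first_eigenvalue_lt_general l m₁ ρ a b₁ v hm hρ ha hb₁ hb₁l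
end

section
/- Let l, m₁, ρ, a be real numbers with l > 0, m₁ > 0, ρ > 0, a > 0 and let 0 < b₁ < l. For v ≥ 0 let Λ(v) = sInf {λ : ℝ | λ > 0 ∧ g_v(λ) = 0}, where g_v(λ) = sin(λl)/λ − (m₁/ρ)·(a² + v²)·sin(λb₁)·sin(λ(l−b₁)). Then for all 0 ≤ v₁ < v₂ one has Λ(v₂) < Λ(v₁); that is, the first eigenvalue (and hence the first natural frequency) of the dynamical system with one moving load strictly decreases as the controlled speed parameter v increases. -/
open Real Set

/-!
Write `c = (m₁ / ρ) * (a ^ 2 + v ^ 2)`, so that `g_v(λ) = sin (λ l) / λ - c * s(λ)` with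
`s(λ) = sin (λ b₁) * sin (λ (l - b₁))`, and `s > 0` on `(0, π / l]`. The characteristic function
tends to `l > 0` at `0⁺` and is `≤ 0` at `π / l`, so the first root `λ₁` for `c₁` exists, lies in
`(0, π / l]` and is attained. Raising `c` to `c₂` makes the function negative at `λ₁`, and the
intermediate value theorem on `(0, λ₁)` yields a smaller root for `c₂`.
-/

namespace LoadedCable

/-- `g_v` with `sin (λ l) / λ` written as `l * sinc (λ l)`, which agrees with it for `λ ≠ 0` and
makes the function continuous, with value `l` at `0`. -/
noncomputable def charFun (l b c lam : ℝ) : ℝ :=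
  l * sinc (lam * l) - c * sin (lam * b) * sin (lam * (l - b))

def posRoots (l b c : ℝ) : Set ℝ := {lam | 0 < lam ∧ charFun l b c lam = 0}

variable {l b c : ℝ}

theorem charFun_of_ne_zero {lam : ℝ} (hlam : lam ≠ 0) :
    charFun l b c lam = sin (lam * l) / lam - c * sin (lam * b) * sin (lam * (l - b)) := by
  rcases eq_or_ne l 0 with rfl | hl
  · simp [charFun]
  · rw [charFun, sinc_of_ne_zero (mul_ne_zero hlam hl)]
    field_simp

theorem continuous_charFun : Continuous (charFun l b c) := by
  unfold charFun
  fun_prop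

theorem charFun_zero : charFun l b c 0 = l := by
  simp [charFun]

theorem charFun_sub_charFun (c₁ c₂ lam : ℝ) :
    charFun l b c₁ lam - charFun l b c₂ lam =
      (c₂ - c₁) * (sin (lam * b) * sin (lam * (l - b))) := by
  unfold charFun; ring

theorem sin_mul_sin_pos (hb : 0 < b) (hbl : b < l) {lam : ℝ} (hlam : 0 < lam)
    (hlam_le : lam * l ≤ π) : 0 < sin (lam * b) * sin (lam * (l - b)) := by
  apply mul_pos <;> apply sin_pos_of_pos_of_lt_pi
  · positivity
  · nlinarith
  · nlinarith
  · nlinarith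

theorem charFun_pi_div_nonpos (hl : 0 < l) (hb : 0 < b) (hbl : b < l) (hc : 0 ≤ c) :
    charFun l b c (π / l) ≤ 0 := by
  have hpos := sin_mul_sin_pos hb hbl (div_pos pi_pos hl) (div_mul_cancel₀ π hl.ne').le
  rw [charFun_of_ne_zero (div_pos pi_pos hl).ne', div_mul_cancel₀ π hl.ne', sin_pi, zero_div,
    zero_sub, mul_assoc, neg_nonpos]
  positivity

theorem exists_mem_posRoots_lt (hl : 0 < l) {t : ℝ} (ht : 0 < t) (hneg : charFun l b c t < 0) :
    ∃ r ∈ posRoots l b c, r < t := by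
  have h0 : (0 : ℝ) ∈ Ioo (charFun l b c t) (charFun l b c 0) := ⟨hneg, charFun_zero.symm ▸ hl⟩
  obtain ⟨r, ⟨hr0, hrt⟩, hr⟩ :=
    intermediate_value_Ioo' ht.le continuous_charFun.continuousOn h0
  exact ⟨r, ⟨hr0, hr⟩, hrt⟩

theorem exists_mem_posRoots_le_pi_div (hl : 0 < l) (hb : 0 < b) (hbl : b < l) (hc : 0 ≤ c) :
    ∃ r ∈ posRoots l b c, r ≤ π / l := by
  rcases (charFun_pi_div_nonpos hl hb hbl hc).lt_or_eq with hneg | hzero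
  · obtain ⟨r, hr, hrlt⟩ := exists_mem_posRoots_lt hl (div_pos pi_pos hl) hneg
    exact ⟨r, hr, hrlt.le⟩
  · exact ⟨π / l, ⟨div_pos pi_pos hl, hzero⟩, le_rfl⟩

theorem bddBelow_posRoots : BddBelow (posRoots l b c) :=
  ⟨0, fun _ hx => hx.1.le⟩

/-- `0` is not a root since `charFun l b c 0 = l ≠ 0`, so the positive roots are the
nonnegative ones, a closed set. -/
theorem isClosed_posRoots (hl : 0 < l) : IsClosed (posRoots l b c) := by
  have : posRoots l b c = {lam | 0 ≤ lam ∧ charFun l b c lam = 0} := by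
    ext lam
    refine and_congr_left fun hroot => ⟨le_of_lt, fun hle => hle.lt_of_ne ?_⟩
    rintro rfl
    exact hl.ne' (charFun_zero.symm.trans hroot)
  rw [this]
  exact (isClosed_le continuous_const continuous_id).inter
    (isClosed_eq continuous_charFun continuous_const)

theorem sInf_posRoots_mem_le_pi_div (hl : 0 < l) (hb : 0 < b) (hbl : b < l) (hc : 0 ≤ c) :
    sInf (posRoots l b c) ∈ posRoots l b c ∧ sInf (posRoots l b c) ≤ π / l := by
  obtain ⟨r, hr, hr_le⟩ := exists_mem_posRoots_le_pi_div hl hb hbl hc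
  exact ⟨(isClosed_posRoots hl).csInf_mem ⟨r, hr⟩ bddBelow_posRoots,
    (csInf_le bddBelow_posRoots hr).trans hr_le⟩

theorem sInf_posRoots_lt_of_lt (hl : 0 < l) (hb : 0 < b) (hbl : b < l) {c₁ c₂ : ℝ}
    (hc₁ : 0 ≤ c₁) (hc : c₁ < c₂) : sInf (posRoots l b c₂) < sInf (posRoots l b c₁) := by
  obtain ⟨⟨hpos, hroot⟩, hle⟩ := sInf_posRoots_mem_le_pi_div hl hb hbl hc₁
  set lam₁ := sInf (posRoots l b c₁)
  have hsin := sin_mul_sin_pos hb hbl hpos ((le_div_iff₀ hl).mp hle)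
  have hneg : charFun l b c₂ lam₁ < 0 := by
    have := charFun_sub_charFun (l := l) (b := b) c₁ c₂ lam₁
    rw [hroot] at this
    nlinarith [mul_pos (sub_pos.mpr hc) hsin]
  obtain ⟨r, hr, hrlt⟩ := exists_mem_posRoots_lt hl hpos hneg
  exact (csInf_le bddBelow_posRoots hr).trans_lt hrlt

end LoadedCable

open LoadedCable in
theorem first_eigenvalue_strictly_decreasing_in_speed_general
    (l m₁ ρ a b₁ : ℝ) (hl : 0 < l) (hm : 0 < m₁) (hρ : 0 < ρ)
    (hb₁ : 0 < b₁) (hb₁l : b₁ < l)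
    (Λ : ℝ → ℝ)
    (hΛ : ∀ v : ℝ, Λ v = sInf {lam : ℝ | lam > 0 ∧
      Real.sin (lam * l) / lam
        - (m₁ / ρ) * (a ^ 2 + v ^ 2) * Real.sin (lam * b₁) * Real.sin (lam * (l - b₁))
      = 0}) :
    ∀ v₁ v₂ : ℝ, 0 ≤ v₁ → v₁ < v₂ → Λ v₂ < Λ v₁ := by
  intro v₁ v₂ hv₁ hv₁₂
  have hΛ_eq : ∀ v, Λ v = sInf (posRoots l b₁ ((m₁ / ρ) * (a ^ 2 + v ^ 2))) := fun v => by
    rw [hΛ v, posRoots]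
    congr 1
    ext lam
    exact and_congr_right fun hlam => by rw [charFun_of_ne_zero hlam.ne']
  rw [hΛ_eq, hΛ_eq]
  have hmρ : 0 < m₁ / ρ := div_pos hm hρ
  refine sInf_posRoots_lt_of_lt hl hb₁ hb₁l (by positivity) ?_
  gcongr

/-- The first eigenvalue of the dynamical system with one moving load strictly
decreases as the controlled speed parameter `v` increases. -/
theorem first_eigenvalue_strictly_decreasing_in_speed
    (l m₁ ρ a b₁ : ℝ) (hl : 0 < l) (hm : 0 < m₁) (hρ : 0 < ρ) (ha : 0 < a)
    (hb₁ : 0 < b₁) (hb₁l : b₁ < l)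
    (Λ : ℝ → ℝ)
    (hΛ : ∀ v : ℝ, Λ v = sInf {lam : ℝ | lam > 0 ∧
      Real.sin (lam * l) / lam
        - (m₁ / ρ) * (a ^ 2 + v ^ 2) * Real.sin (lam * b₁) * Real.sin (lam * (l - b₁))
      = 0}) :
    ∀ v₁ v₂ : ℝ, 0 ≤ v₁ → v₁ < v₂ → Λ v₂ < Λ v₁ :=
  first_eigenvalue_strictly_decreasing_in_speed_general l m₁ ρ a b₁ hl hm hρ hb₁ hb₁l Λ hΛ
end

section
/- Let ρ, T, l be real numbers with ρ > 0, T > 0, l > 0, set a = √(T/ρ), let v be a real number with 0 ≤ v < a, let k be a positive integer, and set ω = πk(a² − v²)/(a·l). Define u : ℝ × ℝ → ℝ by u(x, t) = sin(kπx/l)·sin(ωt + kπvx/(a·l)). Then u is not identically zero, u(0, t) = u(l, t) = 0 for all t, and for all (x, t) one has ρ·(∂²u/∂t² + 2v·∂²u/∂x∂t + v²·∂²u/∂x²) = T·∂²u/∂x². In particular, the moving cable without discrete loads admits harmonic vibrations with the natural frequencies ω_k = (πk/l)·(a² − v²)/a for every k = 1, 2, …. -/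
open Real Set

/-- The moving cable without discrete loads admits harmonic vibrations
`u(x,t) = sin(kπx/l)·sin(ωt + kπvx/(al))` with natural frequencies
`ω_k = (πk/l)·(a² − v²)/a`, solving `ρ(u_tt + 2v u_xt + v² u_xx) = T u_xx`
with `u(0,t) = u(l,t) = 0`. -/
theorem moving_cable_harmonic_vibrations
    (ρ T l : ℝ) (hρ : 0 < ρ) (hT : 0 < T) (hl : 0 < l)
    (a : ℝ) (ha : a = Real.sqrt (T / ρ))
    (v : ℝ) (hv0 : 0 ≤ v) (hva : v < a)
    (k : ℕ) (hk : 0 < k)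
    (ω : ℝ) (hω : ω = π * k * (a ^ 2 - v ^ 2) / (a * l))
    (u : ℝ → ℝ → ℝ)
    (hu : ∀ x t : ℝ, u x t =
      Real.sin (k * π * x / l) * Real.sin (ω * t + k * π * v * x / (a * l))) :
    (¬ ∀ x t : ℝ, u x t = 0) ∧
    (∀ t : ℝ, u 0 t = 0 ∧ u l t = 0) ∧
    (∀ x t : ℝ,
      ρ * (deriv (deriv (fun s => u x s)) t
        + 2 * v * deriv (fun y => deriv (fun s => u y s) t) x
        + v ^ 2 * deriv (deriv (fun y => u y t)) x)
      = T * deriv (deriv (fun y => u y t)) x) := by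
  have ha0 : 0 < a := lt_of_le_of_lt hv0 hva
  have ha2 : a ^ 2 = T / ρ := by
    rw [ha, sq_sqrt (by positivity)]
  have hT' : T = ρ * a ^ 2 := by rw [ha2]; field_simp
  have hl0 : l ≠ 0 := ne_of_gt hl
  have ha0' : a ≠ 0 := ne_of_gt ha0
  have hk0 : (k : ℝ) ≠ 0 := Nat.cast_ne_zero.2 hk.ne'
  have hπ : (0:ℝ) < π := Real.pi_pos
  have hω0 : ω ≠ 0 := by
    rw [hω]
    have hv2 : v ^ 2 < a ^ 2 := by nlinarith
    have : 0 < π * k * (a ^ 2 - v ^ 2) / (a * l) := by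
      apply div_pos
      · have hkpos : (0:ℝ) < k := by exact_mod_cast hk
        nlinarith [mul_pos (mul_pos hπ hkpos) (sub_pos.2 hv2)]
      · positivity
    exact ne_of_gt this
  -- derivative building blocks
  have h1 : ∀ x : ℝ, HasDerivAt (fun y : ℝ => (k : ℝ) * π * y / l) ((k : ℝ) * π / l) x := by
    intro x
    simpa using ((hasDerivAt_id x).const_mul ((k : ℝ) * π)).div_const l
  have h2 : ∀ (t x : ℝ), HasDerivAt (fun y : ℝ => ω * t + (k : ℝ) * π * v * y / (a * l))
      ((k : ℝ) * π * v / (a * l)) x := by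
    intro t x
    simpa using (((hasDerivAt_id x).const_mul ((k : ℝ) * π * v)).div_const (a * l)).const_add (ω * t)
  have h3 : ∀ (x t : ℝ), HasDerivAt (fun s : ℝ => ω * s + (k : ℝ) * π * v * x / (a * l)) ω t := by
    intro x t
    simpa using ((hasDerivAt_id t).const_mul ω).add_const ((k : ℝ) * π * v * x / (a * l))
  have hsinA : ∀ x : ℝ, HasDerivAt (fun y : ℝ => Real.sin ((k : ℝ) * π * y / l))
      (Real.cos ((k : ℝ) * π * x / l) * ((k : ℝ) * π / l)) x :=
    fun x => (Real.hasDerivAt_sin _).comp x (h1 x)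
  have hcosA : ∀ x : ℝ, HasDerivAt (fun y : ℝ => Real.cos ((k : ℝ) * π * y / l))
      (-Real.sin ((k : ℝ) * π * x / l) * ((k : ℝ) * π / l)) x :=
    fun x => (Real.hasDerivAt_cos _).comp x (h1 x)
  have hsinθx : ∀ (t x : ℝ), HasDerivAt (fun y : ℝ => Real.sin (ω * t + (k : ℝ) * π * v * y / (a * l)))
      (Real.cos (ω * t + (k : ℝ) * π * v * x / (a * l)) * ((k : ℝ) * π * v / (a * l))) x :=
    fun t x => (Real.hasDerivAt_sin _).comp x (h2 t x)
  have hcosθx : ∀ (t x : ℝ), HasDerivAt (fun y : ℝ => Real.cos (ω * t + (k : ℝ) * π * v * y / (a * l)))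
      (-Real.sin (ω * t + (k : ℝ) * π * v * x / (a * l)) * ((k : ℝ) * π * v / (a * l))) x :=
    fun t x => (Real.hasDerivAt_cos _).comp x (h2 t x)
  -- first t-derivative
  have dut : ∀ x t : ℝ, deriv (fun s => u x s) t =
      Real.sin ((k : ℝ) * π * x / l) *
        (Real.cos (ω * t + (k : ℝ) * π * v * x / (a * l)) * ω) := by
    intro x t
    simp only [hu]
    exact (((Real.hasDerivAt_sin _).comp t (h3 x t)).const_mul _).deriv
  -- second t-derivative
  have dutt : ∀ x t : ℝ, deriv (deriv (fun s => u x s)) t =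
      Real.sin ((k : ℝ) * π * x / l) *
        (-Real.sin (ω * t + (k : ℝ) * π * v * x / (a * l)) * ω * ω) := by
    intro x t
    have hfe : deriv (fun s => u x s) = fun s =>
        Real.sin ((k : ℝ) * π * x / l) *
          (Real.cos (ω * s + (k : ℝ) * π * v * x / (a * l)) * ω) := funext (dut x)
    rw [hfe]
    exact ((((Real.hasDerivAt_cos _).comp t (h3 x t)).mul_const ω).const_mul _).deriv
  -- mixed derivative
  have duxt : ∀ x t : ℝ, deriv (fun y => deriv (fun s => u y s) t) x =
      Real.cos ((k : ℝ) * π * x / l) * ((k : ℝ) * π / l) *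
        (Real.cos (ω * t + (k : ℝ) * π * v * x / (a * l)) * ω)
      + Real.sin ((k : ℝ) * π * x / l) *
        (-Real.sin (ω * t + (k : ℝ) * π * v * x / (a * l)) * ((k : ℝ) * π * v / (a * l)) * ω) := by
    intro x t
    have hfe : (fun y => deriv (fun s => u y s) t) = fun y =>
        Real.sin ((k : ℝ) * π * y / l) *
          (Real.cos (ω * t + (k : ℝ) * π * v * y / (a * l)) * ω) :=
      funext fun y => dut y t
    rw [hfe]
    exact ((hsinA x).mul ((hcosθx t x).mul_const ω)).deriv
  -- first x-derivative
  have dux : ∀ t x : ℝ, deriv (fun y => u y t) x =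
      Real.cos ((k : ℝ) * π * x / l) * ((k : ℝ) * π / l) *
        Real.sin (ω * t + (k : ℝ) * π * v * x / (a * l))
      + Real.sin ((k : ℝ) * π * x / l) *
        (Real.cos (ω * t + (k : ℝ) * π * v * x / (a * l)) * ((k : ℝ) * π * v / (a * l))) := by
    intro t x
    simp only [hu]
    exact ((hsinA x).mul (hsinθx t x)).deriv
  -- second x-derivative
  have duxx : ∀ t x : ℝ, deriv (deriv (fun y => u y t)) x =
      (-Real.sin ((k : ℝ) * π * x / l) * ((k : ℝ) * π / l) * ((k : ℝ) * π / l)) *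
        Real.sin (ω * t + (k : ℝ) * π * v * x / (a * l))
      + Real.cos ((k : ℝ) * π * x / l) * ((k : ℝ) * π / l) *
        (Real.cos (ω * t + (k : ℝ) * π * v * x / (a * l)) * ((k : ℝ) * π * v / (a * l)))
      + (Real.cos ((k : ℝ) * π * x / l) * ((k : ℝ) * π / l) *
          (Real.cos (ω * t + (k : ℝ) * π * v * x / (a * l)) * ((k : ℝ) * π * v / (a * l)))
        + Real.sin ((k : ℝ) * π * x / l) *
          (-Real.sin (ω * t + (k : ℝ) * π * v * x / (a * l)) * ((k : ℝ) * π * v / (a * l))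
            * ((k : ℝ) * π * v / (a * l)))) := by
    intro t x
    have hfe : deriv (fun y => u y t) = fun y =>
        Real.cos ((k : ℝ) * π * y / l) * ((k : ℝ) * π / l) *
          Real.sin (ω * t + (k : ℝ) * π * v * y / (a * l))
        + Real.sin ((k : ℝ) * π * y / l) *
          (Real.cos (ω * t + (k : ℝ) * π * v * y / (a * l)) * ((k : ℝ) * π * v / (a * l))) :=
      funext (dux t)
    rw [hfe]
    have hd1 := (((hcosA x).mul_const ((k : ℝ) * π / l)).mul (hsinθx t x))
    have hd2 := ((hsinA x).mul ((hcosθx t x).mul_const ((k : ℝ) * π * v / (a * l))))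
    exact (hd1.add hd2).deriv
  refine ⟨?_, ?_, ?_⟩
  · -- not identically zero
    intro h
    have hx0 : (k : ℝ) * π * (l / (2 * k)) / l = π / 2 := by
      field_simp
    set t0 : ℝ := (π / 2 - (k : ℝ) * π * v * (l / (2 * k)) / (a * l)) / ω with ht0
    have := h (l / (2 * k)) t0
    rw [hu] at this
    rw [hx0] at this
    have harg : ω * t0 + (k : ℝ) * π * v * (l / (2 * k)) / (a * l) = π / 2 := by
      rw [ht0]; field_simp; ring
    rw [harg, Real.sin_pi_div_two] at this
    simp at this
  · intro t
    constructor
    · rw [hu]; simp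
    · rw [hu]
      have : (k : ℝ) * π * l / l = (k : ℝ) * π := by field_simp
      rw [this, Real.sin_nat_mul_pi]
      ring
  · intro x t
    rw [dutt, duxt, duxx]
    rw [hω, hT']
    field_simp
    ring
end
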